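/- arXiv:2204.07008 — 3 statements merged into one kernel-verified Lean document; each statement's English description precedes it below -/
import Mathlib

section
/- Let f : H → ℝ be a convex lower semicontinuous function on a Hilbert space H, and let (u_m) be a sequence converging weakly to u* with f(u_m) → f(u*). If f(v) = g(v) + (α/2)‖v − c‖² with g convex and lower semicontinuous and α > 0, then u_m → u* strongly in H. -/
/-
Closed convex sets are weakly closed, so the convex lower semicontinuous functions `g` and
`v ↦ (α/2)‖v - c‖²` are weakly sequentially lower semicontinuous: neither can drop in the weak
limit. Since their sum `f` converges along `u_m`, each summand converges, in particular
`‖u_m - c‖ → ‖u* - c‖`. Weak convergence together with convergence of norms gives strong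
convergence, since `‖x_m - x‖² = ‖x_m‖² - 2⟪x, x_m⟫ + ‖x‖² → 0`.
-/

open Filter Set Topology

theorem Filter.Tendsto.of_add_of_forall_lt_eventually_lt {ι : Type*} {l : Filter ι}
    {a b : ι → ℝ} {A B : ℝ} (ha : ∀ r < A, ∀ᶠ i in l, r < a i)
    (hb : ∀ r < B, ∀ᶠ i in l, r < b i) (hab : Tendsto (fun i => a i + b i) l (𝓝 (A + B))) :
    Tendsto b l (𝓝 B) := by
  refine tendsto_order.2 ⟨hb, fun r hr => ?_⟩
  filter_upwards [ha (A - (r - B) / 2) (by linarith),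
    hab.eventually (eventually_lt_nhds (show A + B < A + B + (r - B) / 2 by linarith))]
    with i hai habi
  linarith

theorem convexOn_const_mul_norm_sub_sq {E : Type*} [SeminormedAddCommGroup E] [NormedSpace ℝ E]
    {α : ℝ} (hα : 0 ≤ α) (c : E) : ConvexOn ℝ univ fun v => α * ‖v - c‖ ^ 2 := by
  have := (((convexOn_norm convex_univ).pow (fun _ _ => norm_nonneg _) 2).translate_right
    (-c)).smul hα
  simpa [sub_eq_neg_add] using this

section LocallyConvex

variable {E : Type*} [AddCommGroup E] [Module ℝ E] [TopologicalSpace E] [IsTopologicalAddGroup E]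
  [ContinuousSMul ℝ E] [LocallyConvexSpace ℝ E] {g : E → ℝ}

theorem ConvexOn.lowerSemicontinuous_comp_toWeakSpace_symm (hconv : ConvexOn ℝ univ g)
    (hlsc : LowerSemicontinuous g) :
    LowerSemicontinuous fun x : WeakSpace ℝ E => g ((toWeakSpace ℝ E).symm x) := by
  rw [lowerSemicontinuous_iff_isClosed_preimage] at hlsc ⊢
  intro r
  have himage : (fun x : WeakSpace ℝ E => g ((toWeakSpace ℝ E).symm x)) ⁻¹' Iic r =
      toWeakSpace ℝ E '' (g ⁻¹' Iic r) :=
    ((toWeakSpace ℝ E).image_eq_preimage_symm (g ⁻¹' Iic r)).symm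
  have hconvex : Convex ℝ (g ⁻¹' Iic r) := by simpa [preimage, Iic] using hconv.convex_le r
  rw [himage, ← closure_subset_iff_isClosed, ← hconvex.toWeakSpace_closure ℝ,
    (hlsc r).closure_eq]

theorem ConvexOn.eventually_lt_of_tendsto_toWeakSpace (hconv : ConvexOn ℝ univ g)
    (hlsc : LowerSemicontinuous g) {ι : Type*} {l : Filter ι} {u : ι → E} {x : E}
    (hu : Tendsto (fun i => toWeakSpace ℝ E (u i)) l (𝓝 (toWeakSpace ℝ E x))) :
    ∀ r < g x, ∀ᶠ i in l, r < g (u i) := fun r hr =>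
  hu.eventually (hconv.lowerSemicontinuous_comp_toWeakSpace_symm hlsc _ r (by simpa using hr))

end LocallyConvex

section InnerProductSpace

variable {H : Type*} [NormedAddCommGroup H] [InnerProductSpace ℝ H] {ι : Type*} {l : Filter ι}
  {u : ι → H} {x : H}

theorem tendsto_toWeakSpace_of_tendsto_inner [CompleteSpace H]
    (hu : ∀ w : H, Tendsto (fun i => inner ℝ w (u i)) l (𝓝 (inner ℝ w x))) :
    Tendsto (fun i => toWeakSpace ℝ H (u i)) l (𝓝 (toWeakSpace ℝ H x)) := by
  refine (WeakBilin.tendsto_iff_forall_eval_tendsto (B := (topDualPairing ℝ H).flip)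
    fun y z hyz => (SeparatingDual.eq_iff_forall_dual_eq (R := ℝ)).2 (LinearMap.congr_fun hyz)).2
    fun φ => ?_
  have := hu ((InnerProductSpace.toDual ℝ H).symm φ)
  simp only [InnerProductSpace.toDual_symm_apply] at this
  exact this

theorem tendsto_of_tendsto_inner_of_tendsto_norm_sq
    (hinner : Tendsto (fun i => inner ℝ x (u i)) l (𝓝 (inner ℝ x x)))
    (hnorm : Tendsto (fun i => ‖u i‖ ^ 2) l (𝓝 (‖x‖ ^ 2))) :
    Tendsto u l (𝓝 x) := by
  have hexpand : ∀ i, ‖u i - x‖ ^ 2 = ‖u i‖ ^ 2 - 2 * inner ℝ x (u i) + ‖x‖ ^ 2 := fun i => by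
    rw [norm_sub_sq_real, real_inner_comm]
  have hsq : Tendsto (fun i => ‖u i - x‖ ^ 2) l (𝓝 0) := by
    simp only [hexpand]
    convert (hnorm.sub (hinner.const_mul 2)).add_const (‖x‖ ^ 2) using 2
    rw [real_inner_self_eq_norm_sq]
    ring
  rw [tendsto_iff_norm_sub_tendsto_zero]
  simpa using hsq.sqrt

end InnerProductSpace

theorem stmt4_general {H : Type*} [NormedAddCommGroup H] [InnerProductSpace ℝ H] [CompleteSpace H]
    (g : H → ℝ) (hgconv : ConvexOn ℝ Set.univ g) (hglsc : LowerSemicontinuous g)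
    (α : ℝ) (hα : 0 < α) (c : H) (f : H → ℝ)
    (hf : ∀ v, f v = g v + α / 2 * ‖v - c‖ ^ 2)
    (u : ℕ → H) (ustar : H)
    (hweak : ∀ w : H, Tendsto (fun m => (inner ℝ w (u m) : ℝ)) atTop (nhds (inner ℝ w ustar)))
    (hfval : Tendsto (fun m => f (u m)) atTop (nhds (f ustar))) :
    Tendsto u atTop (nhds ustar) := by
  have hu := tendsto_toWeakSpace_of_tendsto_inner hweak
  have hquad : Tendsto (fun m => α / 2 * ‖u m - c‖ ^ 2) atTop (𝓝 (α / 2 * ‖ustar - c‖ ^ 2)) :=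
    .of_add_of_forall_lt_eventually_lt (hgconv.eventually_lt_of_tendsto_toWeakSpace hglsc hu)
      ((convexOn_const_mul_norm_sub_sq (by positivity) c).eventually_lt_of_tendsto_toWeakSpace
        (Continuous.lowerSemicontinuous (by fun_prop)) hu) (by simpa only [hf] using hfval)
  have hnorm : Tendsto (fun m => ‖u m - c‖ ^ 2) atTop (𝓝 (‖ustar - c‖ ^ 2)) := by
    convert hquad.const_mul (2 / α) using 2 <;> field_simp
  have hinner : Tendsto (fun m => inner ℝ (ustar - c) (u m - c)) atTop
      (𝓝 (inner ℝ (ustar - c) (ustar - c))) := by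
    simpa only [inner_sub_right] using (hweak (ustar - c)).sub_const _
  simpa using (tendsto_of_tendsto_inner_of_tendsto_norm_sq hinner hnorm).add_const c

/-- If `f(v) = g(v) + (α/2)‖v-c‖²` with `g` convex lower semicontinuous and `α > 0` on a
Hilbert space, and `u_m ⇀ u*` weakly with `f(u_m) → f(u*)`, then `u_m → u*` strongly. -/
theorem stmt4 {H : Type*} [NormedAddCommGroup H] [InnerProductSpace ℝ H] [CompleteSpace H]
    (g : H → ℝ) (hgconv : ConvexOn ℝ Set.univ g) (hglsc : LowerSemicontinuous g)
    (α : ℝ) (hα : 0 < α) (c : H) (f : H → ℝ)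
    (hf : ∀ v, f v = g v + α / 2 * ‖v - c‖ ^ 2)
    (hfconvex : ConvexOn ℝ Set.univ f) (hflsc : LowerSemicontinuous f)
    (u : ℕ → H) (ustar : H)
    (hweak : ∀ w : H, Tendsto (fun m => (inner ℝ w (u m) : ℝ)) atTop (nhds (inner ℝ w ustar)))
    (hfval : Tendsto (fun m => f (u m)) atTop (nhds (f ustar))) :
    Tendsto u atTop (nhds ustar) :=
  stmt4_general g hgconv hglsc α hα c f hf u ustar hweak hfval
end

section
/- Let partitions of (0,T) be nested: every interval I_rᵏ of the level-k partition is contained in some interval I_iℓ of the level-ℓ partition (k ≥ ℓ). Given ā ∈ [−1,1]^{nN_ℓ}, define ã_k ∈ ℝ^{nN_k} by (ã_k)_{(j−1)N_k+r} = ā_{(j−1)N_ℓ+i} · λ(I_rᵏ)/λ(I_iℓ) where I_rᵏ ⊆ I_iℓ. Then āᵀ Π_ℓ(u) = ã_kᵀ Π_k(u) for every u ∈ L¹(0,T;ℝⁿ), and (τ_ℓ/h_k)|（ã_k)_s| ≤ 1 for every component s, where τ_ℓ is the minimal length of level-ℓ intervals and h_k the maximal length of level-k intervals. -/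
open MeasureTheory Set Function

/-!
Every level-`ℓ` interval is, up to a null set, the disjoint union of the level-`k` intervals
nested in it, so its integral splits as the sum of theirs, and `∫_J u = λ(J) ⨍_J u` turns each
piece into a level-`k` average with weight `λ(J)/λ(I)`. The bound holds because
`|ã| ≤ λ(J)/λ(I)`, `τ_ℓ ≤ λ(I)` and `λ(J) ≤ h_k`.
-/

section Refinement

variable {α : Type*} [MeasurableSpace α] {μ : Measure α}

theorem setIntegral_eq_sum_of_ae_cover {ι E : Type*} [NormedAddCommGroup E] [NormedSpace ℝ E]
    {f : α → E} {s : Set α} {t : ι → Set α} (S : Finset ι)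
    (ht : ∀ r ∈ S, MeasurableSet (t r)) (hdisj : (S : Set ι).Pairwise (Disjoint on t))
    (hsub : ∀ r ∈ S, t r ⊆ s) (hcover : μ (s \ ⋃ r ∈ S, t r) = 0)
    (hf : IntegrableOn f s μ) :
    ∫ x in s, f x ∂μ = ∑ r ∈ S, ∫ x in t r, f x ∂μ := by
  have hae : s =ᵐ[μ] ⋃ r ∈ S, t r := by
    rw [ae_eq_set, sdiff_eq_empty.2 (iUnion₂_subset hsub)]
    exact ⟨hcover, measure_empty⟩
  rw [setIntegral_congr_set hae]
  exact integral_biUnion_finset S ht hdisj fun r hr => hf.mono_set (hsub r hr)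

theorem sum_mul_setAverage_eq_of_nested {ι κ : Type*} [Fintype ι] [Fintype κ] {f : α → ℝ}
    (I : κ → Set α) (J : ι → Set α) (σ : ι → κ)
    (hJ : ∀ r, MeasurableSet (J r)) (hJdisj : Pairwise (Disjoint on J))
    (hnest : ∀ r, J r ⊆ I (σ r)) (hcover : ∀ i, μ (I i \ ⋃ r ∈ {r | σ r = i}, J r) = 0)
    (hJfin : ∀ r, μ (J r) ≠ ⊤) (hf : ∀ i, IntegrableOn f (I i) μ) (a : κ → ℝ) :
    ∑ i, a i * ⨍ x in I i, f x ∂μ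
      = ∑ r, a (σ r) * μ.real (J r) / μ.real (I (σ r)) * ⨍ x in J r, f x ∂μ := by
  classical
  rw [← Finset.sum_fiberwise Finset.univ σ]
  refine Finset.sum_congr rfl fun i _ => ?_
  have hsplit : ∫ x in I i, f x ∂μ = ∑ r with σ r = i, ∫ x in J r, f x ∂μ :=
    setIntegral_eq_sum_of_ae_cover _ (fun r _ => hJ r) (hJdisj.set_pairwise _)
      (fun r hr => (Finset.mem_filter.1 hr).2 ▸ hnest r) (by simpa using hcover i) (hf i)
  rw [setAverage_eq, smul_eq_mul, hsplit, Finset.mul_sum, Finset.mul_sum]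
  refine Finset.sum_congr rfl fun r hr => ?_
  obtain rfl := (Finset.mem_filter.1 hr).2
  rw [← measure_smul_setAverage f (hJfin r), smul_eq_mul]
  ring

end Refinement

theorem mul_abs_mul_div_le_one {τ h a x y : ℝ} (hτx : τ ≤ x) (hy : 0 ≤ y) (hyh : y ≤ h)
    (ha : |a| ≤ 1) : τ / h * |a * y / x| ≤ 1 := by
  have hh : 0 ≤ h := hy.trans hyh
  rcases lt_or_ge τ 0 with hτ | hτ
  · have : τ / h ≤ 0 := div_nonpos_of_nonpos_of_nonneg hτ.le hh
    nlinarith [abs_nonneg (a * y / x)]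
  have hx : 0 ≤ x := hτ.trans hτx
  calc τ / h * |a * y / x| = |a| * (τ / x) * (y / h) := by
        rw [abs_div, abs_mul, abs_of_nonneg hy, abs_of_nonneg hx]; ring
    _ ≤ 1 := mul_le_one₀ (mul_le_one₀ ha (by positivity) (div_le_one_of_le₀ hτx hx))
        (by positivity) (div_le_one_of_le₀ hyh hh)

theorem stmt9_general (T : ℝ) (n N Nk : ℕ)
    (I : Fin N → Set ℝ) (J : Fin Nk → Set ℝ)
    (hJ : ∀ r, ∃ a b : ℝ, a < b ∧ J r = Set.Ioo a b)
    (hJdisj : Pairwise (Function.onFun Disjoint J))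
    (hsub : ∀ i, I i ⊆ Set.Ioo 0 T)
    (σmap : Fin Nk → Fin N) (hnest : ∀ r, J r ⊆ I (σmap r))
    (hcover : ∀ i, volume ((I i) \ ⋃ r ∈ {r | σmap r = i}, J r) = 0)
    (τℓ hk : ℝ)
    (hτ : ∀ i, τℓ ≤ (volume (I i)).toReal)
    (hhk : ∀ r, (volume (J r)).toReal ≤ hk)
    (abar : Fin n → Fin N → ℝ) (habar : ∀ j i, |abar j i| ≤ 1)
    (atilde : Fin n → Fin Nk → ℝ)
    (hatilde : ∀ j r, atilde j r
      = abar j (σmap r) * (volume (J r)).toReal / (volume (I (σmap r))).toReal) :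
    (∀ u : ℝ → Fin n → ℝ, Integrable u (volume.restrict (Set.Ioo 0 T)) →
      ∑ j, ∑ i, abar j i * ((volume (I i)).toReal⁻¹ * ∫ t in I i, u t j)
        = ∑ j, ∑ r, atilde j r * ((volume (J r)).toReal⁻¹ * ∫ t in J r, u t j)) ∧
    (∀ j r, τℓ / hk * |atilde j r| ≤ 1) := by
  refine ⟨fun u hu => Finset.sum_congr rfl fun j _ => ?_, fun j r => ?_⟩
  · have hJmeas : ∀ r, MeasurableSet (J r) := fun r => by
      obtain ⟨a, b, -, hab⟩ := hJ r
      exact hab ▸ measurableSet_Ioo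
    have hJfin : ∀ r, volume (J r) ≠ ⊤ := fun r => by
      obtain ⟨a, b, -, hab⟩ := hJ r
      exact hab ▸ measure_Ioo_lt_top.ne
    have huj : IntegrableOn (fun t => u t j) (Ioo 0 T) := hu.eval j
    simp only [← measureReal_def, ← smul_eq_mul (a := (volume.real _)⁻¹), ← setAverage_eq,
      hatilde]
    exact sum_mul_setAverage_eq_of_nested I J σmap hJmeas hJdisj hnest hcover hJfin
      (fun i => huj.mono_set (hsub i)) (abar j)
  · rw [hatilde]
    exact mul_abs_mul_div_le_one (hτ _) ENNReal.toReal_nonneg (hhk r) (habar j _)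

/-- Lifting of cut coefficients through nested partitions: with
`(ã_k)_{(j,r)} = ā_{(j,σ(r))} λ(J_r)/λ(I_{σ(r)})` one has `āᵀΠ_ℓ(u) = ã_kᵀΠ_k(u)` for every
`u ∈ L¹(0,T;ℝⁿ)`, and `(τ_ℓ/h_k)|(ã_k)_s| ≤ 1` for every component `s`. -/
theorem stmt9 (T : ℝ) (hT : 0 < T) (n N Nk : ℕ)
    (I : Fin N → Set ℝ) (J : Fin Nk → Set ℝ)
    (hI : ∀ i, ∃ a b : ℝ, a < b ∧ I i = Set.Ioo a b)
    (hJ : ∀ r, ∃ a b : ℝ, a < b ∧ J r = Set.Ioo a b)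
    (hIdisj : Pairwise (Function.onFun Disjoint I))
    (hJdisj : Pairwise (Function.onFun Disjoint J))
    (hsub : ∀ i, I i ⊆ Set.Ioo 0 T)
    (σmap : Fin Nk → Fin N) (hnest : ∀ r, J r ⊆ I (σmap r))
    (hcover : ∀ i, volume ((I i) \ ⋃ r ∈ {r | σmap r = i}, J r) = 0)
    (τℓ hk : ℝ) (hτpos : 0 < τℓ)
    (hτ : ∀ i, τℓ ≤ (volume (I i)).toReal)
    (hhk : ∀ r, (volume (J r)).toReal ≤ hk)
    (abar : Fin n → Fin N → ℝ) (habar : ∀ j i, |abar j i| ≤ 1)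
    (atilde : Fin n → Fin Nk → ℝ)
    (hatilde : ∀ j r, atilde j r
      = abar j (σmap r) * (volume (J r)).toReal / (volume (I (σmap r))).toReal) :
    (∀ u : ℝ → Fin n → ℝ, Integrable u (volume.restrict (Set.Ioo 0 T)) →
      ∑ j, ∑ i, abar j i * ((volume (I i)).toReal⁻¹ * ∫ t in I i, u t j)
        = ∑ j, ∑ r, atilde j r * ((volume (J r)).toReal⁻¹ * ∫ t in J r, u t j)) ∧
    (∀ j r, τℓ / hk * |atilde j r| ≤ 1) :=
  stmt9_general T n N Nk I J hJ hJdisj hsub σmap hnest hcover τℓ hk hτ hhk abar habar atilde hatilde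
end

section
/- Generalized Farkas lemma application: Let X be a Banach space, φ ∈ X*, G : X → ℝ^m linear continuous, and K ⊆ ℝ^m a closed convex cone such that G*(K°) is weak-* closed in X*. Then ⟨φ, s⟩ ≥ 0 for all s ∈ G⁻¹(K) if and only if −φ ∈ G*(K°). -/
open Filter Set Topology

lemma weakdual_repr {X : Type*} [NormedAddCommGroup X] [NormedSpace ℝ X]
    (f : WeakDual ℝ X →L[ℝ] ℝ) : ∃ x : X, ∀ ψ : WeakDual ℝ X, f ψ = ψ x := by
  have hinj : Function.Injective (topDualPairing ℝ X) := ContinuousLinearMap.coe_injective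
  have hind := (WeakBilin.isEmbedding (B := topDualPairing ℝ X) hinj).toIsInducing
  have hmem : f ⁻¹' Set.Iio 1 ∈ 𝓝 (0 : WeakDual ℝ X) := by
    apply f.continuous.continuousAt.preimage_mem_nhds
    rw [map_zero]
    exact Iio_mem_nhds one_pos
  rw [show 𝓝 (0 : WeakDual ℝ X) = Filter.comap (fun x y => (topDualPairing ℝ X) x y)
      (𝓝 (fun y => (topDualPairing ℝ X) (0 : WeakDual ℝ X) y)) from hind.nhds_eq_comap 0] at hmem
  replace hmem := Filter.mem_comap.1 hmem
  obtain ⟨T, hT, hTsub⟩ := hmem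
  have h0 : (fun y => (topDualPairing ℝ X) (0 : WeakDual ℝ X) y) = fun _ : X => (0 : ℝ) := by
    ext y; rfl
  rw [h0, nhds_pi, Filter.mem_pi] at hT
  obtain ⟨I, hIfin, V, hV, hsub⟩ := hT
  haveI : Finite I := hIfin.to_subtype
  haveI : Fintype I := Fintype.ofFinite I
  have key : ∀ ψ : WeakDual ℝ X, (∀ x ∈ I, ψ x = 0) → f ψ = 0 := by
    intro ψ hz
    have hall : ∀ t : ℝ, t * f ψ < 1 := by
      intro t
      have hmem2 : (fun y => (topDualPairing ℝ X) (t • ψ) y) ∈ I.pi V := by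
        intro x hx
        simp only [topDualPairing_apply]
        have : (t • ψ) x = t • ψ x := rfl
        rw [show (topDualPairing ℝ X) (t • ψ) x = t • ψ x from rfl, hz x hx, smul_zero]
        exact mem_of_mem_nhds (hV x)
      have := hTsub (hsub hmem2)
      have h4 : f (t • ψ) = t * f ψ := f.map_smul t ψ
      have h3 : f (t • ψ) < 1 := this
      rwa [h4] at h3
    by_contra hne
    rcases lt_or_gt_of_ne hne with h | h
    · have := hall (2 / f ψ)
      rw [div_mul_cancel₀ 2 (ne_of_lt h)] at this
      linarith
    · have := hall (2 / f ψ)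
      rw [div_mul_cancel₀ 2 (ne_of_gt h)] at this
      linarith
  let L : I → WeakDual ℝ X →ₗ[ℝ] ℝ := fun x => (topDualPairing ℝ X).flip (x : X)
  have hker : ⨅ x : I, LinearMap.ker (L x) ≤ LinearMap.ker (f : WeakDual ℝ X →ₗ[ℝ] ℝ) := by
    intro ψ hψ
    rw [Submodule.mem_iInf] at hψ
    have : ∀ x ∈ I, ψ x = 0 := fun x hx => hψ ⟨x, hx⟩
    exact key ψ this
  have hspan := mem_span_of_iInf_ker_le_ker hker
  obtain ⟨c, hc⟩ := (Submodule.mem_span_range_iff_exists_fun ℝ).1 hspan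
  refine ⟨∑ i : I, c i • (i : X), fun ψ => ?_⟩
  have := LinearMap.congr_fun hc ψ
  simp only [LinearMap.coe_sum, Finset.sum_apply, LinearMap.smul_apply] at this
  have h2 : f ψ = ∑ x : I, c x • (L x) ψ := this.symm
  rw [h2, map_sum]
  refine Finset.sum_congr rfl fun i _ => ?_
  show c i • ψ (i : X) = ψ (c i • (i : X))
  rw [map_smul]



/-- Generalized Farkas lemma: let `X` be a Banach space, `φ ∈ X*`, `G : X → ℝ^m` linear
continuous, `K ⊆ ℝ^m` a closed convex cone with polar `K°`, and suppose `G*(K°)` is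
weak-* closed in `X*`. Then `⟨φ,s⟩ ≥ 0` for all `s ∈ G⁻¹(K)` iff there is `λ ∈ K°` with
`φ + G*λ = 0`. -/
theorem stmt14 {X : Type*} [NormedAddCommGroup X] [NormedSpace ℝ X] [CompleteSpace X]
    {m : ℕ} (φ : X →L[ℝ] ℝ) (G : X →L[ℝ] (Fin m → ℝ))
    (K : Set (Fin m → ℝ)) (hKcl : IsClosed K) (hKconv : Convex ℝ K)
    (hK0 : (0 : Fin m → ℝ) ∈ K)
    (hKcone : ∀ c : ℝ, 0 ≤ c → ∀ z ∈ K, c • z ∈ K)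
    (Kpolar : Set (Fin m → ℝ))
    (hpolar : Kpolar = {y | ∀ z ∈ K, ∑ i, y i * z i ≤ 0})
    (hwclosed : IsClosed
      {ψ : WeakDual ℝ X | ∃ lam ∈ Kpolar, ∀ s : X, ψ s = ∑ i, lam i * G s i}) :
    (∀ s : X, G s ∈ K → 0 ≤ φ s) ↔
      ∃ lam ∈ Kpolar, ∀ s : X, φ s + ∑ i, lam i * G s i = 0 := by
  constructor
  · intro h
    by_contra hnone
    have hnot : (show WeakDual ℝ X from -φ) ∉
        {ψ : WeakDual ℝ X | ∃ lam ∈ Kpolar, ∀ s : X, ψ s = ∑ i, lam i * G s i} := by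
      rintro ⟨lam, hlam, heq⟩
      refine hnone ⟨lam, hlam, fun s => ?_⟩
      have h1 : (show WeakDual ℝ X from -φ) s = -(φ s) := rfl
      have := heq s
      rw [h1] at this
      linarith
    have hCconv : Convex ℝ
        {ψ : WeakDual ℝ X | ∃ lam ∈ Kpolar, ∀ s : X, ψ s = ∑ i, lam i * G s i} := by
      rintro ψ₁ ⟨l₁, hl₁, he₁⟩ ψ₂ ⟨l₂, hl₂, he₂⟩ a b ha hb hab
      rw [hpolar] at hl₁ hl₂
      refine ⟨a • l₁ + b • l₂, ?_, fun s => ?_⟩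
      · rw [hpolar]
        intro z hz
        have hcalc : ∑ i, (a • l₁ + b • l₂) i * z i
            = a * ∑ i, l₁ i * z i + b * ∑ i, l₂ i * z i := by
          rw [Finset.mul_sum, Finset.mul_sum, ← Finset.sum_add_distrib]
          refine Finset.sum_congr rfl fun i _ => ?_
          simp only [Pi.add_apply, Pi.smul_apply, smul_eq_mul]
          ring
        rw [hcalc]
        have h1 := hl₁ z hz
        have h2 := hl₂ z hz
        nlinarith
      · have h1 : (a • ψ₁ + b • ψ₂) s = a * ψ₁ s + b * ψ₂ s := rfl
        rw [h1, he₁ s, he₂ s, Finset.mul_sum, Finset.mul_sum, ← Finset.sum_add_distrib]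
        refine Finset.sum_congr rfl fun i _ => ?_
        simp only [Pi.add_apply, Pi.smul_apply, smul_eq_mul]
        ring
    haveI : LocallyConvexSpace ℝ (WeakDual ℝ X) := WeakBilin.locallyConvexSpace
    obtain ⟨f, u, hfC, hu⟩ := geometric_hahn_banach_closed_point hCconv hwclosed hnot
    have h0C : (0 : WeakDual ℝ X) ∈
        {ψ : WeakDual ℝ X | ∃ lam ∈ Kpolar, ∀ s : X, ψ s = ∑ i, lam i * G s i} := by
      refine ⟨0, ?_, fun s => ?_⟩
      · rw [hpolar]; intro z hz; simp
      · show (0 : ℝ) = ∑ i, (0 : Fin m → ℝ) i * G s i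
        simp
    have hupos : 0 < u := by
      have := hfC 0 h0C
      rwa [map_zero] at this
    have hCnonpos : ∀ ψ ∈ {ψ : WeakDual ℝ X | ∃ lam ∈ Kpolar,
        ∀ s : X, ψ s = ∑ i, lam i * G s i}, f ψ ≤ 0 := by
      rintro ψ ⟨lam, hlam, heq⟩
      rw [hpolar] at hlam
      by_contra hpos
      push_neg at hpos
      have ht : ((u / f ψ + 1) • ψ) ∈ {ψ : WeakDual ℝ X | ∃ lam ∈ Kpolar,
          ∀ s : X, ψ s = ∑ i, lam i * G s i} := by
        refine ⟨(u / f ψ + 1) • lam, ?_, fun s => ?_⟩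
        · rw [hpolar]
          intro z hz
          have h1 := hlam z hz
          have h2 : 0 ≤ u / f ψ + 1 := by positivity
          have hcalc : ∑ i, ((u / f ψ + 1) • lam) i * z i
              = (u / f ψ + 1) * ∑ i, lam i * z i := by
            rw [Finset.mul_sum]
            exact Finset.sum_congr rfl fun i _ => by
              simp only [Pi.smul_apply, smul_eq_mul, mul_assoc]
          rw [hcalc]
          exact mul_nonpos_of_nonneg_of_nonpos h2 h1
        · have h1 : ((u / f ψ + 1) • ψ) s = (u / f ψ + 1) * ψ s := rfl
          rw [h1, heq s, Finset.mul_sum]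
          exact Finset.sum_congr rfl fun i _ => by
            simp only [Pi.smul_apply, smul_eq_mul, mul_assoc]
      have := hfC _ ht
      rw [map_smul, smul_eq_mul, add_mul, div_mul_cancel₀ u (ne_of_gt hpos), one_mul] at this
      linarith
    obtain ⟨x₀, hx₀⟩ := weakdual_repr f
    have hG : ∀ lam : Fin m → ℝ, (∀ z ∈ K, ∑ i, lam i * z i ≤ 0) →
        ∑ i, lam i * G x₀ i ≤ 0 := by
      intro lam hlam
      let ψ : X →L[ℝ] ℝ := ∑ i, lam i • ((ContinuousLinearMap.proj i).comp G)
      have hψapp : ∀ s : X, ψ s = ∑ i, lam i * G s i := by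
        intro s
        simp [ψ, ContinuousLinearMap.sum_apply, ContinuousLinearMap.smul_apply,
          ContinuousLinearMap.comp_apply, ContinuousLinearMap.proj_apply, smul_eq_mul]
      have hψC : (show WeakDual ℝ X from ψ) ∈ {ψ : WeakDual ℝ X | ∃ lam ∈ Kpolar,
          ∀ s : X, ψ s = ∑ i, lam i * G s i} :=
        ⟨lam, by rw [hpolar]; exact hlam, fun s => hψapp s⟩
      have := hCnonpos _ hψC
      rw [hx₀] at this
      calc ∑ i, lam i * G x₀ i = (show WeakDual ℝ X from ψ) x₀ := (hψapp x₀).symm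
        _ ≤ 0 := this
    have hGK : G x₀ ∈ K := by
      by_contra hnK
      let Kc : ProperCone ℝ (EuclideanSpace ℝ (Fin m)) :=
        { carrier := {x | WithLp.ofLp x ∈ K}
          zero_mem' := hK0
          smul_mem' := fun c x hx => hKcone c c.2 _ hx
          add_mem' := fun {x y} hx hy => by
            have hmid := hKconv hx hy (by norm_num : (0:ℝ) ≤ 1/2)
              (by norm_num : (0:ℝ) ≤ 1/2) (by norm_num)
            have h2 := hKcone 2 (by norm_num) _ hmid
            have heq : (2:ℝ) • ((1/2:ℝ) • WithLp.ofLp x + (1/2:ℝ) • WithLp.ofLp y)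
                = WithLp.ofLp (x + y) := by
              rw [smul_add, smul_smul, smul_smul, WithLp.ofLp_add]
              norm_num
            rwa [heq] at h2
          isClosed' := hKcl.preimage (PiLp.continuous_ofLp 2 _) }
      obtain ⟨y, hy1, hy2⟩ :=
        Kc.hyperplane_separation' (x₀ := WithLp.toLp 2 (G x₀)) (fun h => hnK h)
      have hGneg := hG (fun i => -(y i)) ?_
      · simp only [PiLp.inner_apply, RCLike.inner_apply, conj_trivial] at hy2
        have hsum : ∑ i, (fun i => -(y i)) i * G x₀ i = -∑ i, y i * G x₀ i := by
          rw [← Finset.sum_neg_distrib]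
          exact Finset.sum_congr rfl fun i _ => by ring
        rw [hsum] at hGneg
        linarith
      · intro z hz
        have h' := hy1 (WithLp.toLp 2 z) hz
        simp only [PiLp.inner_apply, RCLike.inner_apply, conj_trivial] at h'
        have hsum : ∑ i, (fun i => -(y i)) i * z i = -∑ i, y i * z i := by
          rw [← Finset.sum_neg_distrib]
          exact Finset.sum_congr rfl fun i _ => by ring
        rw [hsum]
        linarith
    have hphi := h x₀ hGK
    have hfval : f (show WeakDual ℝ X from -φ) = -(φ x₀) := by rw [hx₀]; rfl
    rw [hfval] at hu
    linarith
  · rintro ⟨lam, hlam, heq⟩ s hs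
    rw [hpolar] at hlam
    have h1 := hlam (G s) hs
    have h2 := heq s
    linarith
end
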